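/- arXiv:2309.05642 — 2 statements merged into one kernel-verified Lean document; each statement's English description precedes it below -/
import Mathlib

section
/- There exists a coherent instance of proxy selection with 8 voters, 4 proposals, and majority agreement (k = 0), in which for every possible advertised type of a single dRep the elected proposal has intrinsic score at most 5, while the optimal intrinsic score is 8. Hence a single dRep cannot achieve an approximation ratio better than 8/5 = 1.6, even on coherent instances with majority agreement. -/
open Finset

/-- An instance of proxy selection: `intrinsic i j` is voter `i`'s intrinsic approval of
proposal `j`; `visible i j` records whether this preference is revealed to the voter
(the revealed preference is `some (intrinsic i j)` if visible and `⊥` otherwise). -/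
structure PSInstance (n m : ℕ) where
  intrinsic : Fin n → Fin m → Bool
  visible : Fin n → Fin m → Bool

namespace PSInstance

variable {n m : ℕ}

/-- Revealed preference of voter `i` on proposal `j`. -/
def revealed (I : PSInstance n m) (i : Fin n) (j : Fin m) : Option Bool :=
  if I.visible i j then some (I.intrinsic i j) else none

/-- The revealed set `R_i` of voter `i`. -/
def Rset (I : PSInstance n m) (i : Fin n) : Finset (Fin m) :=
  univ.filter fun j => I.visible i j

/-- `m_i = |R_i|`. -/
def mi (I : PSInstance n m) (i : Fin n) : ℕ := (I.Rset i).card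

/-- Hamming distance between voter `i`'s revealed ballot and type `t`, restricted to `R_i`. -/
def dist (I : PSInstance n m) (i : Fin n) (t : Fin m → Bool) : ℕ :=
  (univ.filter fun j => I.visible i j ∧ I.intrinsic i j ≠ t j).card

/-- Voter `i` (with reluctance parameter `k`) is attracted by a dRep of type `t`. -/
def Attracted (I : PSInstance n m) (k : ℕ) (i : Fin n) (t : Fin m → Bool) : Prop :=
  I.dist i t ≤ (I.mi i - k) / 2

instance (I : PSInstance n m) (k : ℕ) (i : Fin n) (t : Fin m → Bool) :
    Decidable (I.Attracted k i t) := by unfold Attracted; exact inferInstance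

/-- Intrinsic approval score of proposal `j`. -/
def sc (I : PSInstance n m) (j : Fin m) : ℕ :=
  (univ.filter fun i => I.intrinsic i j = true).card

/-- Revealed approval score of proposal `j`. -/
def rsc (I : PSInstance n m) (j : Fin m) : ℕ :=
  (univ.filter fun i => I.visible i j ∧ I.intrinsic i j = true).card

/-- `j` is an intrinsically optimal proposal (`win(P)`). -/
def IsOpt (I : PSInstance n m) (j : Fin m) : Prop := ∀ j', I.sc j' ≤ I.sc j

/-- Total score of proposal `j` given a family `D` of dReps and a delegation assignment
`deleg` (delegating voters contribute through their dRep's ballot, the rest vote their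
revealed preferences directly). -/
def totalScore {ι : Type} (I : PSInstance n m) (D : ι → Fin m → Bool)
    (deleg : Fin n → Option ι) (j : Fin m) : ℕ :=
  (univ.filter fun i => (match deleg i with
    | some d => D d j
    | none => I.visible i j && I.intrinsic i j) = true).card

/-- A delegation assignment is valid (w.r.t. per-voter reluctance parameters `k`) if every
delegating voter is attracted by their chosen dRep, and every voter attracted by at least
one dRep delegates (to an arbitrary one of them). -/
def ValidDeleg {ι : Type} (I : PSInstance n m) (k : Fin n → ℕ) (D : ι → Fin m → Bool)
    (deleg : Fin n → Option ι) : Prop :=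
  (∀ i d, deleg i = some d → I.Attracted (k i) i (D d)) ∧
  (∀ i, (∃ d, I.Attracted (k i) i (D d)) → deleg i ≠ none)

/-- `j` is elected: it maximizes total score, ties broken in favor of maximum intrinsic score. -/
def Elected {ι : Type} (I : PSInstance n m) (D : ι → Fin m → Bool)
    (deleg : Fin n → Option ι) (j : Fin m) : Prop :=
  (∀ j', I.totalScore D deleg j' ≤ I.totalScore D deleg j) ∧
  (∀ j', I.totalScore D deleg j' = I.totalScore D deleg j → I.sc j' ≤ I.sc j)

/-- `j` is elected when ties are broken in favor of maximum *revealed* score. -/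
def ElectedRev {ι : Type} (I : PSInstance n m) (D : ι → Fin m → Bool)
    (deleg : Fin n → Option ι) (j : Fin m) : Prop :=
  (∀ j', I.totalScore D deleg j' ≤ I.totalScore D deleg j) ∧
  (∀ j', I.totalScore D deleg j' = I.totalScore D deleg j → I.rsc j' ≤ I.rsc j)

end PSInstance

namespace PSInstance

variable {n m : ℕ}

/-- The score of proposal `j` when a single dRep advertises type `t`: voters it attracts vote
`t`, the others vote their revealed preferences. -/
def soloScore (I : PSInstance n m) (k : Fin n → ℕ) (t : Fin m → Bool) (j : Fin m) : ℕ :=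
  #{i | (if I.Attracted (k i) i t then t j else I.visible i j && I.intrinsic i j) = true}

theorem ValidDeleg.eq_some_iff {I : PSInstance n m} {k : Fin n → ℕ} {t : Fin m → Bool}
    {deleg : Fin n → Option Unit} (h : I.ValidDeleg k (fun _ => t) deleg) (i : Fin n) :
    deleg i = some () ↔ I.Attracted (k i) i t := by
  refine ⟨fun hi => h.1 i () hi, fun hi => ?_⟩
  have := h.2 i ⟨(), hi⟩
  cases hd : deleg i <;> simp_all

theorem ValidDeleg.totalScore_eq {I : PSInstance n m} {k : Fin n → ℕ} {t : Fin m → Bool}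
    {deleg : Fin n → Option Unit} (h : I.ValidDeleg k (fun _ => t) deleg) (j : Fin m) :
    I.totalScore (fun _ => t) deleg j = I.soloScore k t j := by
  unfold totalScore soloScore
  congr 1
  ext i
  have hi := h.eq_some_iff i
  cases hd : deleg i <;> simp_all

theorem Elected.soloScore_le {I : PSInstance n m} {k : Fin n → ℕ} {t : Fin m → Bool}
    {deleg : Fin n → Option Unit} {j : Fin m} (he : I.Elected (fun _ => t) deleg j)
    (h : I.ValidDeleg k (fun _ => t) deleg) (j' : Fin m) :
    I.soloScore k t j' ≤ I.soloScore k t j := by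
  simpa only [h.totalScore_eq] using he.1 j'

end PSInstance

open PSInstance

/-- Proposal `0` is `c₁`, approved by everyone and revealed to no one; on `c₂, c₃, c₄` the
voters' ballots are `110, 101, 011, 100, 010, 001, 111, 111`. -/
def hiddenConsensus : PSInstance 8 4 where
  intrinsic := ![![true, true, true, false],
    ![true, true, false, true],
    ![true, false, true, true],
    ![true, true, false, false],
    ![true, false, true, false],
    ![true, false, false, true],
    ![true, true, true, true],
    ![true, true, true, true]]
  visible := fun _ j => j ≠ 0

theorem hiddenConsensus_sc_zero : hiddenConsensus.sc 0 = 8 := by decide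

theorem hiddenConsensus_sc_of_ne_zero {j : Fin 4} (hj : j ≠ 0) : hiddenConsensus.sc j = 5 := by
  fin_cases j <;> first | exact absurd rfl hj | decide

theorem hiddenConsensus_isOpt_zero : hiddenConsensus.IsOpt 0 := fun j => by
  by_cases hj : j = 0
  · rw [hj]
  · rw [hiddenConsensus_sc_of_ne_zero hj, hiddenConsensus_sc_zero]; decide

/-- The hidden `c₁` only collects the votes of the voters `t` attracts, and some proposal collects
strictly more (strictly, since ties are broken in favour of `c₁`). -/
theorem hiddenConsensus_exists_soloScore_zero_lt :
    ∀ t : Fin 4 → Bool, ∃ j, hiddenConsensus.soloScore (fun _ => 0) t 0 <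
      hiddenConsensus.soloScore (fun _ => 0) t j := by
  decide

/-- There is a coherent instance with 8 voters, 4 proposals and majority
agreement (`k = 0`) in which the optimal intrinsic score is 8, yet for every single dRep
the elected proposal has intrinsic score at most 5 (so no better than 1.6-approximation). -/
theorem stmt4 :
    ∃ I : PSInstance 8 4,
      (∀ i i' : Fin 8, I.Rset i = I.Rset i') ∧
      (∃ j, I.IsOpt j ∧ I.sc j = 8) ∧
      ∀ t : Fin 4 → Bool, ∀ deleg : Fin 8 → Option Unit,
        I.ValidDeleg (fun _ => 0) (fun _ => t) deleg →
        ∀ j, I.Elected (fun _ => t) deleg j → I.sc j ≤ 5 := by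
  refine ⟨hiddenConsensus, fun _ _ => rfl, ⟨0, hiddenConsensus_isOpt_zero, hiddenConsensus_sc_zero⟩,
    fun t deleg hvalid j he => ?_⟩
  have hj : j ≠ 0 := by
    rintro rfl
    obtain ⟨j', hlt⟩ := hiddenConsensus_exists_soloScore_zero_lt t
    exact (he.soloScore_le hvalid j').not_gt hlt
  exact (hiddenConsensus_sc_of_ne_zero hj).le
end

section
/- Let c ∈ o(m) and k = m − 1 − 2c, with m = (n−1)(c+1) + 1 and n ≥ 4. There exists a coherent instance of proxy selection with n voters and m proposals, each voter having revealed set of size m − 1, in which for every advertised type of a single dRep the elected proposal has intrinsic score at most 2 while the optimal intrinsic score is n. In particular, for sufficiently large reluctance thresholds the approximation ratio is Ω(n) even on coherent instances. -/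
open Finset

/-!
Everybody approves the last proposal, which nobody reveals, so it is the intrinsic winner with
score `n` but can only collect votes through the dRep. The revealed ballots are pairwise at Hamming
distance at least `2c + 2`, whereas with reluctance `m - 1 - 2c` a voter is attracted only by types
within distance `c`; hence at most one voter delegates and the hidden proposal gets total score at
most `1`. Some revealed proposal always keeps two votes (its block owner and voter `n - 1`, one of
whom votes directly), so a revealed proposal is elected, and each of those is intrinsically
approved by at most two voters.
-/

namespace PSInstance

variable {n m : ℕ} (I : PSInstance n m)

lemma sc_le (j : Fin m) : I.sc j ≤ n :=
  (card_filter_le _ _).trans (card_fin n).le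

lemma isOpt_of_sc_eq {j : Fin m} (h : I.sc j = n) : I.IsOpt j :=
  fun j' => (I.sc_le j').trans h.ge

def ballotDist (i i' : Fin n) : ℕ :=
  #{j | I.visible i j ∧ I.visible i' j ∧ I.intrinsic i j ≠ I.intrinsic i' j}

lemma ballotDist_comm (i i' : Fin n) : I.ballotDist i i' = I.ballotDist i' i := by
  simp only [ballotDist, ne_comm, and_left_comm]

lemma ballotDist_le_dist_add_dist (i i' : Fin n) (t : Fin m → Bool) :
    I.ballotDist i i' ≤ I.dist i t + I.dist i' t := by
  refine (card_le_card fun j hj => ?_).trans (card_union_le _ _)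
  simp only [mem_filter, mem_univ, true_and, mem_union] at hj ⊢
  by_cases h : I.intrinsic i j = t j
  · exact Or.inr ⟨hj.2.1, fun h' => hj.2.2 (h.trans h'.symm)⟩
  · exact Or.inl ⟨hj.1, h⟩

lemma dist_eq_mi_of_forall_ne {i : Fin n} {t : Fin m → Bool}
    (h : ∀ j, I.visible i j → I.intrinsic i j ≠ t j) : I.dist i t = I.mi i := by
  unfold dist mi Rset
  congr 1
  ext j
  simpa using h j

def vote {ι : Type} (D : ι → Fin m → Bool) (deleg : Fin n → Option ι) (i : Fin n)
    (j : Fin m) : Bool :=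
  match deleg i with
  | some d => D d j
  | none => I.visible i j && I.intrinsic i j

variable {ι : Type} {D : ι → Fin m → Bool} {deleg : Fin n → Option ι} {j : Fin m}

lemma totalScore_eq_card_vote : I.totalScore D deleg j = #{i | I.vote D deleg i j} := rfl

lemma vote_of_eq_none {i : Fin n} (h : deleg i = none) :
    I.vote D deleg i j = (I.visible i j && I.intrinsic i j) := by
  simp [vote, h]

lemma vote_of_eq_some {i : Fin n} {d : ι} (h : deleg i = some d) : I.vote D deleg i j = D d j := by
  simp [vote, h]

lemma two_le_totalScore {v w : Fin n} (hvw : v ≠ w) (hv : I.vote D deleg v j)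
    (hw : I.vote D deleg w j) : 2 ≤ I.totalScore D deleg j := by
  rw [totalScore_eq_card_vote, ← card_pair hvw]
  exact card_le_card (by simp [insert_subset_iff, hv, hw])

lemma totalScore_le_card_delegating (hj : ∀ i, I.visible i j = false) :
    I.totalScore D deleg j ≤ #{i | deleg i ≠ none} := by
  refine card_le_card fun i => ?_
  simp only [mem_filter, mem_univ, true_and]
  cases deleg i <;> simp [hj]

end PSInstance

open PSInstance

/-- Everything is 0-indexed: the paper's voter `i + 1 < n` with block `i(c+1)+1, …, (i+1)(c+1)` is
voter `i` with block `{j | j / (c + 1) = i}`, and the paper's hidden proposal `m` is `Fin.last`. -/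
def hardInstance (n c : ℕ) : PSInstance n ((n - 1) * (c + 1) + 1) where
  intrinsic i j := j = Fin.last _ ∨ (i : ℕ) = n - 1 ∨ (j : ℕ) / (c + 1) = i
  visible _ j := j ≠ Fin.last _

def cell {n c : ℕ} (a : Fin (n - 1)) (k : Fin (c + 1)) : Fin ((n - 1) * (c + 1) + 1) :=
  (finProdFinEquiv (a, k)).castSucc

section HardInstance

variable {n c : ℕ}

lemma val_cell (a : Fin (n - 1)) (k : Fin (c + 1)) : (cell a k : ℕ) = k + (c + 1) * a :=
  finProdFinEquiv_apply_val _

lemma cell_ne_last (a : Fin (n - 1)) (k : Fin (c + 1)) : cell a k ≠ Fin.last _ :=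
  Fin.castSucc_ne_last _

lemma cell_injective : Function.Injective fun p : Fin (n - 1) × Fin (c + 1) => cell p.1 p.2 :=
  Fin.castSucc_injective _ |>.comp finProdFinEquiv.injective

lemma exists_cell_eq {j : Fin ((n - 1) * (c + 1) + 1)} (hj : j ≠ Fin.last _) :
    ∃ a k, cell a k = j := by
  obtain ⟨j', rfl⟩ := Fin.exists_castSucc_eq.2 hj
  exact ⟨_, _, congrArg Fin.castSucc (finProdFinEquiv.apply_symm_apply j')⟩

lemma div_cell (a : Fin (n - 1)) (k : Fin (c + 1)) : (cell a k : ℕ) / (c + 1) = a := by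
  rw [val_cell, Nat.add_mul_div_left _ _ c.succ_pos, Nat.div_eq_of_lt k.isLt, zero_add]

lemma hardInstance_visible (i : Fin n) (j : Fin ((n - 1) * (c + 1) + 1)) :
    (hardInstance n c).visible i j ↔ j ≠ Fin.last _ := by
  simp [hardInstance]

lemma hardInstance_intrinsic_cell (i : Fin n) (a : Fin (n - 1)) (k : Fin (c + 1)) :
    (hardInstance n c).intrinsic i (cell a k) ↔ (i : ℕ) = n - 1 ∨ (a : ℕ) = i := by
  simp [hardInstance, cell_ne_last, div_cell]

lemma hardInstance_mi (i : Fin n) : (hardInstance n c).mi i = (n - 1) * (c + 1) := by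
  have : (hardInstance n c).Rset i = univ.erase (Fin.last _) := by
    ext j
    simp [Rset, hardInstance_visible]
  rw [mi, this, card_erase_of_mem (mem_univ _), card_fin, Nat.add_sub_cancel]

lemma hardInstance_sc_last : (hardInstance n c).sc (Fin.last _) = n := by
  simp [sc, hardInstance]

lemma hardInstance_sc_le_two {j : Fin ((n - 1) * (c + 1) + 1)} (hj : j ≠ Fin.last _) :
    (hardInstance n c).sc j ≤ 2 := by
  refine (card_le_card_of_injOn (fun i : Fin n => (i : ℕ)) (t := {n - 1, (j : ℕ) / (c + 1)})
    (fun i hi => ?_) Fin.val_injective.injOn).trans (card_le_two)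
  simp only [hardInstance, coe_filter, mem_univ, true_and, Set.mem_ofPred_eq, hj,
    decide_eq_true_eq, false_or] at hi
  simp only [coe_insert, coe_singleton, Set.mem_insert_iff, Set.mem_singleton_iff]
  omega

lemma card_mul_le_hardInstance_ballotDist {i i' : Fin n} (B : Finset (Fin (n - 1)))
    (hB : ∀ a ∈ B, ((i : ℕ) = n - 1 ∨ (a : ℕ) = i) ↔ ¬((i' : ℕ) = n - 1 ∨ (a : ℕ) = i')) :
    #B * (c + 1) ≤ (hardInstance n c).ballotDist i i' := by
  have hcard : #(image (fun p => cell p.1 p.2) (B ×ˢ (univ : Finset (Fin (c + 1))))) =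
      #B * (c + 1) := by
    rw [card_image_of_injective _ cell_injective, card_product, card_fin]
  refine hcard ▸ card_le_card fun j hj => ?_
  obtain ⟨⟨a, k⟩, hak, rfl⟩ := mem_image.1 hj
  simp only [mem_filter, mem_univ, true_and, hardInstance_visible, ne_eq,
    cell_ne_last, not_false_eq_true]
  rw [Bool.eq_iff_iff, hardInstance_intrinsic_cell, hardInstance_intrinsic_cell]
  have := hB a (mem_product.1 hak).1
  tauto

lemma two_mul_le_hardInstance_ballotDist_of_lt (hn : 4 ≤ n) {i i' : Fin n}
    (hi : (i : ℕ) < n - 1) (h : i ≠ i') : 2 * (c + 1) ≤ (hardInstance n c).ballotDist i i' := by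
  have hval := Fin.val_ne_of_ne h
  let a : Fin (n - 1) := ⟨i, hi⟩
  by_cases hi' : (i' : ℕ) = n - 1
  · refine le_trans ?_ (card_mul_le_hardInstance_ballotDist (univ.erase a) fun b hb => ?_)
    · rw [card_erase_of_mem (mem_univ _), card_fin]
      exact Nat.mul_le_mul_right _ (by omega)
    · have := Fin.val_ne_of_ne (ne_of_mem_erase hb)
      simp only [a] at this
      omega
  · let a' : Fin (n - 1) := ⟨i', by omega⟩
    have haa' : a ≠ a' := Fin.ne_of_val_ne hval
    refine le_trans ?_ (card_mul_le_hardInstance_ballotDist {a, a'} fun b hb => ?_)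
    · rw [card_pair haa']
    · simp only [mem_insert, mem_singleton] at hb
      rcases hb with rfl | rfl <;> simp [a, a'] <;> omega

lemma two_mul_le_hardInstance_ballotDist (hn : 4 ≤ n) {i i' : Fin n} (h : i ≠ i') :
    2 * (c + 1) ≤ (hardInstance n c).ballotDist i i' := by
  by_cases hi : (i : ℕ) < n - 1
  · exact two_mul_le_hardInstance_ballotDist_of_lt hn hi h
  · have := Fin.val_ne_of_ne h
    rw [ballotDist_comm]
    exact two_mul_le_hardInstance_ballotDist_of_lt hn (by omega) h.symm

lemma hardInstance_attracted_iff (hn : 3 ≤ n) {i : Fin n}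
    {t : Fin ((n - 1) * (c + 1) + 1) → Bool} :
    (hardInstance n c).Attracted ((n - 1) * (c + 1) + 1 - 1 - 2 * c) i t ↔
      (hardInstance n c).dist i t ≤ c := by
  have : 2 * (c + 1) ≤ (n - 1) * (c + 1) := Nat.mul_le_mul_right _ (by omega)
  rw [Attracted, hardInstance_mi]
  omega

lemma eq_of_hardInstance_attracted (hn : 4 ≤ n) {i i' : Fin n}
    {t : Fin ((n - 1) * (c + 1) + 1) → Bool}
    (hi : (hardInstance n c).Attracted ((n - 1) * (c + 1) + 1 - 1 - 2 * c) i t)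
    (hi' : (hardInstance n c).Attracted ((n - 1) * (c + 1) + 1 - 1 - 2 * c) i' t) : i = i' := by
  by_contra h
  have := two_mul_le_hardInstance_ballotDist (c := c) hn h
  have := (hardInstance n c).ballotDist_le_dist_add_dist i i' t
  rw [hardInstance_attracted_iff (by omega)] at hi hi'
  omega

lemma eq_of_hardInstance_validDeleg (hn : 4 ≤ n)
    {t : Fin ((n - 1) * (c + 1) + 1) → Bool} {deleg : Fin n → Option Unit}
    (hv : (hardInstance n c).ValidDeleg (fun _ => (n - 1) * (c + 1) + 1 - 1 - 2 * c)
      (fun _ => t) deleg)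
    {i i' : Fin n} (hi : deleg i ≠ none) (hi' : deleg i' ≠ none) : i = i' := by
  obtain ⟨d, hd⟩ := Option.ne_none_iff_exists'.1 hi
  obtain ⟨d', hd'⟩ := Option.ne_none_iff_exists'.1 hi'
  exact eq_of_hardInstance_attracted hn (hv.1 i d hd) (hv.1 i' d' hd')

lemma hardInstance_totalScore_last_le_one (hn : 4 ≤ n)
    {t : Fin ((n - 1) * (c + 1) + 1) → Bool} {deleg : Fin n → Option Unit}
    (hv : (hardInstance n c).ValidDeleg (fun _ => (n - 1) * (c + 1) + 1 - 1 - 2 * c)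
      (fun _ => t) deleg) :
    (hardInstance n c).totalScore (fun _ => t) deleg (Fin.last _) ≤ 1 := by
  refine (totalScore_le_card_delegating _ fun i => by simp [hardInstance]).trans
    (card_le_one.2 fun i hi i' hi' => ?_)
  exact eq_of_hardInstance_validDeleg hn hv (mem_filter.1 hi).2 (mem_filter.1 hi').2

lemma exists_ne_last_of_hardInstance_attracted (hn : 3 ≤ n) {i : Fin n} (hi : (i : ℕ) = n - 1)
    {t : Fin ((n - 1) * (c + 1) + 1) → Bool}
    (h : (hardInstance n c).Attracted ((n - 1) * (c + 1) + 1 - 1 - 2 * c) i t) :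
    ∃ j ≠ Fin.last _, t j = true := by
  by_contra! ht
  have hdist : (hardInstance n c).dist i t = (hardInstance n c).mi i :=
    dist_eq_mi_of_forall_ne _ fun j hj => by
      simpa [hardInstance, hi] using ht j ((hardInstance_visible _ _).1 hj)
  rw [hardInstance_attracted_iff hn, hdist, hardInstance_mi] at h
  have : 2 * (c + 1) ≤ (n - 1) * (c + 1) := Nat.mul_le_mul_right _ (by omega)
  omega

lemma hardInstance_exists_two_le_totalScore (hn : 4 ≤ n)
    {t : Fin ((n - 1) * (c + 1) + 1) → Bool} {deleg : Fin n → Option Unit}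
    (hv : (hardInstance n c).ValidDeleg (fun _ => (n - 1) * (c + 1) + 1 - 1 - 2 * c)
      (fun _ => t) deleg) :
    ∃ j, 2 ≤ (hardInstance n c).totalScore (fun _ => t) deleg j := by
  let owner (a : Fin (n - 1)) : Fin n := a.castLE (n.sub_le 1)
  let last : Fin n := ⟨n - 1, by omega⟩
  have owner_ne_last (a : Fin (n - 1)) : owner a ≠ last :=
    Fin.ne_of_val_ne (by simp [owner, last]; omega)
  have vote_owner (a : Fin (n - 1)) (k : Fin (c + 1)) (ha : deleg (owner a) = none) :
      (hardInstance n c).vote (fun _ => t) deleg (owner a) (cell a k) := by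
    simp [vote_of_eq_none _ ha, hardInstance_visible, cell_ne_last, hardInstance_intrinsic_cell,
      owner]
  cases hlast : deleg last with
  | none =>
    obtain ⟨a, ha⟩ : ∃ a, deleg (owner a) = none := by
      by_contra! h
      have := Fin.val_eq_of_eq <|
        eq_of_hardInstance_validDeleg hn hv (h ⟨0, by omega⟩) (h ⟨1, by omega⟩)
      simp [owner] at this
    refine ⟨cell a 0, two_le_totalScore _ (owner_ne_last a) (vote_owner a 0 ha) ?_⟩
    simp [vote_of_eq_none _ hlast, hardInstance_visible, cell_ne_last, hardInstance_intrinsic_cell,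
      last]
  | some u =>
    obtain ⟨j, hj, htj⟩ :=
      exists_ne_last_of_hardInstance_attracted (by omega) rfl (hv.1 last u hlast)
    obtain ⟨a, k, rfl⟩ := exists_cell_eq hj
    have ha : deleg (owner a) = none := by
      by_contra h
      exact owner_ne_last a (eq_of_hardInstance_validDeleg hn hv h (by simp [hlast]))
    exact ⟨cell a k, two_le_totalScore _ (owner_ne_last a) (vote_owner a k ha)
      (by simp [vote_of_eq_some _ hlast, htj])⟩

end HardInstance

/-- For `n ≥ 4`, `m = (n-1)(c+1)+1` and `k = m - 1 - 2c`, there is a coherent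
instance with `n` voters and `m` proposals, each voter having revealed set of size `m-1`,
where the optimal intrinsic score is `n` but every single dRep leads to an elected
proposal of intrinsic score at most 2. -/
theorem stmt7 (n c : ℕ) (hn : 4 ≤ n) :
    ∃ I : PSInstance n ((n - 1) * (c + 1) + 1),
      (∀ i i' : Fin n, I.Rset i = I.Rset i') ∧
      (∀ i, I.mi i = (n - 1) * (c + 1)) ∧
      (∃ j, I.IsOpt j ∧ I.sc j = n) ∧
      ∀ t : Fin ((n - 1) * (c + 1) + 1) → Bool, ∀ deleg : Fin n → Option Unit,
        I.ValidDeleg (fun _ => (n - 1) * (c + 1) + 1 - 1 - 2 * c) (fun _ => t) deleg →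
        ∀ j, I.Elected (fun _ => t) deleg j → I.sc j ≤ 2 := by
  refine ⟨hardInstance n c, fun _ _ => rfl, fun _ => hardInstance_mi _,
    ⟨_, isOpt_of_sc_eq _ hardInstance_sc_last, hardInstance_sc_last⟩, fun t deleg hv j hj => ?_⟩
  refine hardInstance_sc_le_two fun hlast => ?_
  subst hlast
  obtain ⟨j₀, h₀⟩ := hardInstance_exists_two_le_totalScore hn hv
  have := (hj.1 j₀).trans (hardInstance_totalScore_last_le_one hn hv)
  omega
end
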